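/- If N ≥ 2, d ≥ max{63, 46N−79}, and n ≥ 7d+14, then the number of partitions of n into parts from T_{5,d} is at least the number of partitions of n into parts from S_d^N. -/

import Mathlib

/-- `rho A n` is the number of partitions of `n` all of whose parts lie in `A`. -/
noncomputable def rho (A : Set ℕ) (n : ℕ) : ℕ :=
  Nat.card {p : n.Partition // ∀ x ∈ p.parts, x ∈ A}

/-- `qpart a d n` is the number of partitions of `n` into parts that are all `≥ a`
and pairwise differ by at least `d` (so, in particular, are distinct when `d ≥ 1`). -/
noncomputable def qpart (a d n : ℕ) : ℕ :=
  Nat.card {p : n.Partition //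
    (∀ x ∈ p.parts, a ≤ x) ∧
    (∀ x ∈ p.parts, p.parts.count x ≤ 1) ∧
    (∀ x ∈ p.parts, ∀ y ∈ p.parts, x ≠ y → d ≤ max x y - min x y)}

/-- Positive integers congruent to `±a` modulo `m`, excluding `m - a`. -/
noncomputable def QminusSet (a m : ℕ) : Set ℕ :=
  {x | x % m = a % m ∨ x % m = (m - a) % m} \ {m - a}

/-- `Qminus a d n` counts partitions of `n` into parts `≡ ±a (mod d+3)`,
excluding the part `d+3-a`. -/
noncomputable def Qminus (a d n : ℕ) : ℕ := rho (QminusSet a (d + 3)) n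

/-- `Qmm a d n` counts partitions of `n` into parts `≡ ±a (mod d+3)`,
excluding both the parts `a` and `d+3-a`. -/
noncomputable def Qmm (a d n : ℕ) : ℕ := rho (QminusSet a (d + 3) \ {a}) n

/-- `Tset s d` is the set of naturals congruent to `1` or to `d + 2^j` for some
`1 ≤ j ≤ s - 1` modulo `2d`. -/
def Tset (s d : ℕ) : Set ℕ :=
  {y | y % (2 * d) = 1 % (2 * d) ∨
    ∃ j, 1 ≤ j ∧ j + 1 ≤ s ∧ y % (2 * d) = (d + 2 ^ j) % (2 * d)}

/-- `T5 d` : naturals congruent to `1, d+2, d+4, d+8` or `d+16` modulo `2d`. -/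
def T5 (d : ℕ) : Set ℕ := Tset 5 d

/-- `Sset d N` : naturals congruent to `±1` modulo `d-N+3`, excluding `d-N+2`. -/
def Sset (d N : ℕ) : Set ℕ :=
  {x | x % (d - N + 3) = 1 % (d - N + 3) ∨ x % (d - N + 3) = (d - N + 2) % (d - N + 3)}
    \ {d - N + 2}

/-- `xN d N i` is the `i`-th smallest element of `Sset d N` (1-indexed). -/
noncomputable def xN (d N i : ℕ) : ℕ := Nat.nth (· ∈ Sset d N) (i - 1)

/-- `yT d i` is the `i`-th smallest element of `T5 d` (1-indexed). -/
noncomputable def yT (d i : ℕ) : ℕ := Nat.nth (· ∈ T5 d) (i - 1)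

/-!
Put `m = d - N + 3`, so that the parts allowed by `Sset d N` are `1`, `m + 1` and the numbers
`k * m ± 1` with `k ≥ 2`. An `S`-partition is sent to a `T5`-partition as follows: the copies of
`m + 1` are grouped in fours, each group becoming one part `3d + 2 ≤ 4(m + 1)` and each leftover
copy a part `d + 2 = (m + 1) + (N - 2)`; the parts `k * m ± 1` are sent, in increasing order, to
`d + 4, d + 8, d + 16, 2d + 1` and then to the elements of `T5 d` beyond `3d + 2`, and each of
them shrinks by at least `3N - 6`, which pays for the at most three leftover copies. If there is
no such part, the image is no larger than the original or consists of at most three parts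
`d + 2`, so in every case it has sum at most `n` and can be padded with ones. The multiplicities
of `d + 2` and `3d + 2` recover the number of parts `m + 1`, the other parts `> 1` recover the
parts `k * m ± 1`, and the sum `n` then recovers the number of ones.
-/

open Multiset

lemma Multiset.eq_of_map_eq_map_of_injOn {α β : Type*} [Nonempty α] {f : α → β} {A : Set α}
    (hf : Set.InjOn f A) {s t : Multiset α} (hs : ∀ x ∈ s, x ∈ A) (ht : ∀ x ∈ t, x ∈ A)
    (h : s.map f = t.map f) : s = t := by
  have retract (u : Multiset α) (hu : ∀ x ∈ u, x ∈ A) :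
      (u.map f).map (Function.invFunOn f A) = u := by
    rw [map_map]
    conv_rhs => rw [← map_id u]
    exact map_congr rfl fun x hx => hf.leftInvOn_invFunOn (hu x hx)
  rw [← retract s hs, h, retract t ht]

lemma Multiset.eq_of_add_replicate_one_eq {a b : Multiset ℕ} {k l : ℕ}
    (ha : ∀ y ∈ a, y ≠ 1) (hb : ∀ y ∈ b, y ≠ 1)
    (h : a + replicate k 1 = b + replicate l 1) : a = b := by
  have hones (j : ℕ) : (replicate j 1).filter (· ≠ 1) = 0 :=
    filter_eq_nil.mpr fun y hy => by simp [eq_of_mem_replicate hy]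
  simpa [filter_add, filter_eq_self.mpr ha, filter_eq_self.mpr hb, hones] using
    congrArg (filter (· ≠ 1)) h

lemma rho_le_rho_of_injOn {S T : Set ℕ} {n : ℕ} (hT : 1 ∈ T)
    (f : Multiset ℕ → Multiset ℕ) (hf : ∀ p : n.Partition, (∀ x ∈ p.parts, x ∈ S) →
      (f p.parts).sum ≤ n ∧ ∀ y ∈ f p.parts, 2 ≤ y ∧ y ∈ T)
    (hinj : ∀ p q : n.Partition, (∀ x ∈ p.parts, x ∈ S) → (∀ x ∈ q.parts, x ∈ S) →
      f p.parts = f q.parts → p = q) :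
    rho S n ≤ rho T n := by
  let pad (p : {p : n.Partition // ∀ x ∈ p.parts, x ∈ S}) :
      {p : n.Partition // ∀ x ∈ p.parts, x ∈ T} :=
    ⟨⟨f p.1.parts + replicate (n - (f p.1.parts).sum) 1,
      fun {y} hy => by
        rcases mem_add.mp hy with hy | hy
        · have := ((hf p.1 p.2).2 y hy).1; omega
        · rw [eq_of_mem_replicate hy]; exact one_pos,
      by rw [sum_add, sum_replicate, smul_eq_mul, mul_one]; have := (hf p.1 p.2).1; omega⟩,
      fun y hy => by
        rcases mem_add.mp hy with hy | hy
        · exact ((hf p.1 p.2).2 y hy).2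
        · rw [eq_of_mem_replicate hy]; exact hT⟩
  refine Nat.card_le_card_of_injective pad fun p q hpq => Subtype.ext (hinj p.1 q.1 p.2 q.2 ?_)
  have hne (r : {p : n.Partition // ∀ x ∈ p.parts, x ∈ S}) : ∀ y ∈ f r.1.parts, y ≠ 1 :=
    fun y hy => by have := ((hf r.1 r.2).2 y hy).1; omega
  exact Multiset.eq_of_add_replicate_one_eq (hne p) (hne q) (k := n - (f p.1.parts).sum)
    (l := n - (f q.1.parts).sum) (congrArg (fun r => r.1.parts) hpq)

def tResidue (d : ℕ) : ℕ → ℕ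
  | 0 => 2
  | 1 => 4
  | 2 => 8
  | 3 => 16
  | _ => d + 1

/-- For `d > 16`, `tElem d 0, tElem d 1, …` lists `T5 d \ {1}` in increasing order:
`d + 2, d + 4, d + 8, d + 16, 2d + 1, 3d + 2, …`, with period five and step `2d`. -/
def tElem (d j : ℕ) : ℕ := (2 * (j / 5) + 1) * d + tResidue d (j % 5)

lemma tElem_five_mul_add (d q : ℕ) {r : ℕ} (hr : r < 5) :
    tElem d (5 * q + r) = (2 * q + 1) * d + tResidue d r := by
  rw [tElem, show (5 * q + r) / 5 = q by omega, show (5 * q + r) % 5 = r by omega]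

lemma exists_eq_five_mul_add (j : ℕ) : ∃ q r, r < 5 ∧ j = 5 * q + r :=
  ⟨j / 5, j % 5, Nat.mod_lt _ (by norm_num), (Nat.div_add_mod j 5).symm⟩

lemma tElem_mem_T5 (d j : ℕ) : tElem d j ∈ T5 d := by
  obtain ⟨q, r, hr, rfl⟩ := exists_eq_five_mul_add j
  have key : ∀ a, ((2 * q + 1) * d + a) % (2 * d) = (d + a) % (2 * d) := fun a => by
    rw [show (2 * q + 1) * d + a = d + a + q * (2 * d) by ring, Nat.add_mul_mod_self_right]
  rw [tElem_five_mul_add d q hr]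
  unfold T5 Tset
  interval_cases r
  · exact Or.inr ⟨1, le_rfl, by norm_num, key _⟩
  · exact Or.inr ⟨2, by norm_num, by norm_num, key _⟩
  · exact Or.inr ⟨3, by norm_num, by norm_num, key _⟩
  · exact Or.inr ⟨4, by norm_num, by norm_num, key _⟩
  · refine Or.inl ?_
    rw [key, show tResidue d 4 = d + 1 from rfl, show d + (d + 1) = 1 + 1 * (2 * d) by ring,
      Nat.add_mul_mod_self_right]

lemma tElem_zero (d : ℕ) : tElem d 0 = d + 2 := by simp [tElem, tResidue]

lemma tElem_five (d : ℕ) : tElem d 5 = 3 * d + 2 := by simp [tElem, tResidue]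

lemma tElem_strictMono {d : ℕ} (hd : 16 ≤ d) : StrictMono (tElem d) := by
  refine strictMono_nat_of_lt_succ fun j => ?_
  obtain ⟨q, r, hr, rfl⟩ := exists_eq_five_mul_add j
  rcases (by omega : r = 4 ∨ r < 4) with rfl | h4
  · rw [tElem_five_mul_add d q hr, show 5 * q + 4 + 1 = 5 * (q + 1) + 0 by ring,
      tElem_five_mul_add d _ (by norm_num)]
    simp only [tResidue]; nlinarith
  · rw [tElem_five_mul_add d q hr, add_assoc, tElem_five_mul_add d q (by omega)]
    interval_cases r <;> simp only [tResidue] <;> omega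

lemma add_two_le_tElem {d : ℕ} (hd : 1 ≤ d) (j : ℕ) : d + 2 ≤ tElem d j := by
  obtain ⟨q, r, hr, rfl⟩ := exists_eq_five_mul_add j
  rw [tElem_five_mul_add d q hr]
  interval_cases r <;> simp only [tResidue] <;> nlinarith

lemma five_mul_tElem_le {d : ℕ} (hd : 12 ≤ d) (j : ℕ) :
    5 * tElem d j ≤ (2 * j + 5) * d + 10 := by
  obtain ⟨q, r, hr, rfl⟩ := exists_eq_five_mul_add j
  rw [tElem_five_mul_add d q hr]
  interval_cases r <;> simp only [tResidue] <;> nlinarith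

def offMultiples (m : ℕ) : Set ℕ := {v | ∃ k, 2 ≤ k ∧ (v = k * m + 1 ∨ v + 1 = k * m)}

lemma mem_offMultiples_of_mem_Sset {N d m v : ℕ} (hm : m + N = d + 3) (hm3 : 3 ≤ m)
    (hv : v ∈ Sset d N) (hv1 : v ≠ 1) (hvm : v ≠ m + 1) : v ∈ offMultiples m := by
  obtain ⟨hmod, hne⟩ := hv
  rw [show d - N + 3 = m by omega, show d - N + 2 = m - 1 by omega,
    Nat.mod_eq_of_lt (by omega : 1 < m), Nat.mod_eq_of_lt (by omega : m - 1 < m)] at hmod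
  rw [Set.mem_singleton_iff, show d - N + 2 = m - 1 by omega] at hne
  obtain ⟨q, hq⟩ : ∃ q, v = q * m + v % m := ⟨v / m, (Nat.div_add_mod' v m).symm⟩
  rcases hmod with h | h
  · refine ⟨q, ?_, Or.inl (by omega)⟩
    rcases (by omega : q = 0 ∨ q = 1 ∨ 2 ≤ q) with rfl | rfl | h2 <;> omega
  · refine ⟨q + 1, ?_, Or.inr (by rw [add_one_mul]; omega)⟩
    rcases (by omega : q = 0 ∨ 1 ≤ q) with rfl | h1 <;> omega

/-- The elements `2m - 1 < 2m + 1 < 3m - 1 < 3m + 1 < 4m - 1 < …` of `offMultiples m` get the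
indices `1, 2, 3, 4, 6, 7, …`; the indices `0` and `5` (the parts `d + 2` and `3d + 2`) are
reserved for the copies of `m + 1`. -/
def sIndex (m v : ℕ) : ℕ :=
  if v % m = 1 then (if (v + 1) / m ≤ 3 then 2 * ((v + 1) / m) - 2 else 2 * ((v + 1) / m) - 1)
  else (if (v + 1) / m ≤ 3 then 2 * ((v + 1) / m) - 3 else 2 * ((v + 1) / m) - 2)

lemma sIndex_of_eq_mul_add_one {m k v : ℕ} (hm : 3 ≤ m) (hv : v = k * m + 1) :
    sIndex m v = if k ≤ 3 then 2 * k - 2 else 2 * k - 1 := by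
  have hmod : v % m = 1 := by
    rw [hv, Nat.mul_comm, Nat.mul_add_mod, Nat.mod_eq_of_lt (by omega)]
  have hdiv : (v + 1) / m = k := by
    rw [hv, add_assoc, Nat.mul_comm, Nat.mul_add_div (by omega), Nat.div_eq_of_lt (by omega)]
    rfl
  simp [sIndex, hmod, hdiv]

lemma sIndex_of_add_one_eq_mul {m k v : ℕ} (hm : 3 ≤ m) (hk : 1 ≤ k) (hv : v + 1 = k * m) :
    sIndex m v = if k ≤ 3 then 2 * k - 3 else 2 * k - 2 := by
  have hdiv : (v + 1) / m = k := by rw [hv, Nat.mul_div_cancel _ (by omega)]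
  have hmod : v % m ≠ 1 := by
    obtain ⟨k, rfl⟩ : ∃ k', k = k' + 1 := ⟨k - 1, by omega⟩
    rw [show v = m - 1 + k * m by rw [add_one_mul] at hv; omega, Nat.add_mul_mod_self_right,
      Nat.mod_eq_of_lt (by omega)]
    omega
  simp [sIndex, hmod, hdiv]

lemma sIndex_of_mem_offMultiples {m v : ℕ} (hm : 3 ≤ m) (hv : v ∈ offMultiples m) :
    ∃ k, 2 ≤ k ∧
      (v = k * m + 1 ∧ sIndex m v = (if k ≤ 3 then 2 * k - 2 else 2 * k - 1) ∨
        v + 1 = k * m ∧ sIndex m v = (if k ≤ 3 then 2 * k - 3 else 2 * k - 2)) := by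
  obtain ⟨k, hk, hv | hv⟩ := hv
  · exact ⟨k, hk, Or.inl ⟨hv, sIndex_of_eq_mul_add_one hm hv⟩⟩
  · exact ⟨k, hk, Or.inr ⟨hv, sIndex_of_add_one_eq_mul hm (by omega) hv⟩⟩

lemma sIndex_ne_zero_and_ne_five {m v : ℕ} (hm : 3 ≤ m) (hv : v ∈ offMultiples m) :
    sIndex m v ≠ 0 ∧ sIndex m v ≠ 5 := by
  obtain ⟨k, hk, ⟨-, h⟩ | ⟨-, h⟩⟩ := sIndex_of_mem_offMultiples hm hv <;>
    rw [h] <;> split_ifs <;> omega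

lemma sIndex_injOn {m : ℕ} (hm : 3 ≤ m) : Set.InjOn (sIndex m) (offMultiples m) := by
  intro u hu v hv h
  obtain ⟨a, ha, ⟨hu, hau⟩ | ⟨hu, hau⟩⟩ := sIndex_of_mem_offMultiples hm hu <;>
  obtain ⟨b, hb, ⟨hv, hbv⟩ | ⟨hv, hbv⟩⟩ := sIndex_of_mem_offMultiples hm hv <;>
  rw [hau, hbv] at h <;>
  first
  | (obtain rfl : a = b := by split_ifs at h <;> omega); omega
  | (exfalso; split_ifs at h <;> omega)

lemma tElem_sIndex_add_le {N d m v : ℕ} (hN : 2 ≤ N) (hdN : 46 * N ≤ d + 79)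
    (hm : m + N = d + 3) (hv : v ∈ offMultiples m) :
    tElem d (sIndex m v) + 3 * N ≤ v + 6 := by
  obtain ⟨k, hk, ⟨hv, h⟩ | ⟨hv, h⟩⟩ := sIndex_of_mem_offMultiples (by omega) hv <;>
    rw [h] <;> rcases (by omega : k = 2 ∨ k = 3 ∨ 4 ≤ k) with rfl | rfl | hk4
  any_goals simp [tElem, tResidue]; omega
  all_goals
    obtain ⟨j, rfl⟩ : ∃ j, k = j + 4 := ⟨k - 4, by omega⟩
    have hslope : j * (4 * d) ≤ j * (5 * m) := Nat.mul_le_mul_left j (by omega)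
    simp only [if_neg (by omega : ¬ j + 4 ≤ 3)]
  · have := five_mul_tElem_le (d := d) (by omega) (2 * (j + 4) - 1)
    rw [show 2 * (j + 4) - 1 = 2 * j + 7 by omega] at this ⊢
    linarith
  · have := five_mul_tElem_le (d := d) (by omega) (2 * (j + 4) - 2)
    rw [show 2 * (j + 4) - 2 = 2 * j + 6 by omega] at this ⊢
    linarith

def core (m : ℕ) (s : Multiset ℕ) : Multiset ℕ := s.filter (fun v => v ≠ 1 ∧ v ≠ m + 1)

lemma eq_replicate_add_replicate_add_core {m : ℕ} (hm : m ≠ 0) (s : Multiset ℕ) :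
    s = replicate (s.count 1) 1 + replicate (s.count (m + 1)) (m + 1) + core m s := by
  ext a
  simp only [core, count_add, count_replicate, count_filter]
  split_ifs <;> subst_vars <;> omega

lemma sum_eq_count_add_count_mul_add_sum_core {m : ℕ} (hm : m ≠ 0) (s : Multiset ℕ) :
    s.sum = s.count 1 + s.count (m + 1) * (m + 1) + (core m s).sum := by
  conv_lhs => rw [eq_replicate_add_replicate_add_core hm s]
  simp [sum_replicate]

lemma mem_offMultiples_of_mem_core {N d m : ℕ} (hm : m + N = d + 3) (hm3 : 3 ≤ m)
    {s : Multiset ℕ} (hs : ∀ x ∈ s, x ∈ Sset d N) :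
    ∀ v ∈ core m s, v ∈ offMultiples m := by
  intro v hv
  obtain ⟨hvs, hv1, hvm⟩ : v ∈ s ∧ v ≠ 1 ∧ v ≠ m + 1 := by simpa [core] using hv
  exact mem_offMultiples_of_mem_Sset hm hm3 (hs v hvs) hv1 hvm

def t5Indices (m : ℕ) (s : Multiset ℕ) : Multiset ℕ :=
  replicate (s.count (m + 1) % 4) 0 + replicate (s.count (m + 1) / 4) 5 + (core m s).map (sIndex m)

lemma t5Indices_eq_iff_of_mem_offMultiples {m : ℕ} (hm : 3 ≤ m) {s t : Multiset ℕ}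
    (hs : ∀ v ∈ core m s, v ∈ offMultiples m)
    (ht : ∀ v ∈ core m t, v ∈ offMultiples m) :
    t5Indices m s = t5Indices m t ↔
      s.count (m + 1) = t.count (m + 1) ∧ core m s = core m t := by
  refine ⟨fun h => ?_, fun ⟨hc, hcore⟩ => by rw [t5Indices, t5Indices, hc, hcore]⟩
  have hreserved (u : Multiset ℕ) (hu : ∀ v ∈ core m u, v ∈ offMultiples m) :
      ∀ i ∈ (core m u).map (sIndex m), i ≠ 0 ∧ i ≠ 5 := fun i hi => by
    obtain ⟨v, hv, rfl⟩ := mem_map.mp hi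
    exact sIndex_ne_zero_and_ne_five hm (hu v hv)
  have hcount (u : Multiset ℕ) (hu : ∀ v ∈ core m u, v ∈ offMultiples m) :
      (t5Indices m u).count 0 = u.count (m + 1) % 4 ∧
        (t5Indices m u).count 5 = u.count (m + 1) / 4 := by
    simp [t5Indices, count_replicate, count_eq_zero.mpr fun h => (hreserved u hu 0 h).1 rfl,
      count_eq_zero.mpr fun h => (hreserved u hu 5 h).2 rfl]
  have hfilter (u : Multiset ℕ) (hu : ∀ v ∈ core m u, v ∈ offMultiples m) :
      (t5Indices m u).filter (fun i => i ≠ 0 ∧ i ≠ 5) = (core m u).map (sIndex m) := by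
    simp [t5Indices, filter_add, filter_eq_self.mpr (hreserved u hu), mem_replicate]
  have h0 := congrArg (count 0) h
  have h5 := congrArg (count 5) h
  have hf := congrArg (filter (fun i => i ≠ 0 ∧ i ≠ 5)) h
  rw [(hcount s hs).1, (hcount t ht).1] at h0
  rw [(hcount s hs).2, (hcount t ht).2] at h5
  rw [hfilter s hs, hfilter t ht] at hf
  exact ⟨by omega, Multiset.eq_of_map_eq_map_of_injOn (sIndex_injOn hm) hs ht hf⟩

lemma eq_of_t5Indices_eq {m : ℕ} (hm : 3 ≤ m) {s t : Multiset ℕ}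
    (hs : ∀ v ∈ core m s, v ∈ offMultiples m) (ht : ∀ v ∈ core m t, v ∈ offMultiples m)
    (hsum : s.sum = t.sum) (h : t5Indices m s = t5Indices m t) : s = t := by
  obtain ⟨hc, hcore⟩ := (t5Indices_eq_iff_of_mem_offMultiples hm hs ht).1 h
  have hs_sum := sum_eq_count_add_count_mul_add_sum_core (by omega : m ≠ 0) s
  have ht_sum := sum_eq_count_add_count_mul_add_sum_core (by omega : m ≠ 0) t
  have hones : s.count 1 = t.count 1 := by rw [hc, hcore] at hs_sum; omega
  rw [eq_replicate_add_replicate_add_core (by omega : m ≠ 0) s,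
    eq_replicate_add_replicate_add_core (by omega : m ≠ 0) t, hones, hc, hcore]

lemma mod_four_mul_add_div_four_mul_le {N d m : ℕ} (hN : 2 ≤ N) (hdN : 46 * N ≤ d + 79) (hm : m + N = d + 3)
    (j : ℕ) : (j % 4) * (d + 2) + (j / 4) * (3 * d + 2) + 6 ≤ j * (m + 1) + 3 * N ∧
      (4 ≤ j → (j % 4) * (d + 2) + (j / 4) * (3 * d + 2) ≤ j * (m + 1)) := by
  obtain ⟨q, r, hr, rfl⟩ : ∃ q r, r < 4 ∧ j = 4 * q + r :=
    ⟨j / 4, j % 4, Nat.mod_lt _ (by norm_num), (Nat.div_add_mod j 4).symm⟩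
  rw [show (4 * q + r) % 4 = r by omega, show (4 * q + r) / 4 = q by omega]
  have hq : q * (3 * d + 2) + q * (7 * N) ≤ q * (4 * (m + 1)) + q * 20 := by
    rw [← mul_add, ← mul_add]; exact Nat.mul_le_mul_left q (by omega)
  interval_cases r <;> constructor <;> intros <;> nlinarith

lemma sum_map_tElem_t5Indices_le {N d m : ℕ} (hN : 2 ≤ N) (hdN : 46 * N ≤ d + 79)
    (hm : m + N = d + 3) {s : Multiset ℕ} (hs : ∀ v ∈ core m s, v ∈ offMultiples m) :
    ((t5Indices m s).map (tElem d)).sum ≤ max (3 * (d + 2)) s.sum := by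
  have hsum := sum_eq_count_add_count_mul_add_sum_core (by omega : m ≠ 0) s
  have hsplit : ((t5Indices m s).map (tElem d)).sum =
      (s.count (m + 1) % 4) * (d + 2) + (s.count (m + 1) / 4) * (3 * d + 2) +
        ((core m s).map fun v => tElem d (sIndex m v)).sum := by
    simp [t5Indices, sum_replicate, tElem_zero, tElem_five, map_map]
  set j := s.count (m + 1)
  have hcost := mod_four_mul_add_div_four_mul_le hN hdN hm j
  rw [hsplit]
  rcases eq_or_ne (core m s) 0 with hcore | hcore
  · rw [hcore, Multiset.map_zero, sum_zero] at *
    rcases Nat.lt_or_ge j 4 with hj | hj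
    · rw [Nat.mod_eq_of_lt hj, Nat.div_eq_of_lt hj]
      have : j * (d + 2) ≤ 3 * (d + 2) := Nat.mul_le_mul_right _ (by omega)
      omega
    · have := hcost.2 hj
      omega
  · obtain ⟨v, hv⟩ := exists_mem_of_ne_zero hcore
    obtain ⟨rest, hrest⟩ := exists_cons_of_mem hv
    have hsaving := tElem_sIndex_add_le hN hdN hm (hs v hv)
    have hrest_le : (rest.map fun u => tElem d (sIndex m u)).sum ≤ rest.sum := by
      simpa using sum_map_le_sum_map _ id fun u hu => by
        have := tElem_sIndex_add_le hN hdN hm (hs u (hrest ▸ mem_cons_of_mem hu))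
        simp only [id]; omega
    rw [hrest, map_cons, sum_cons]
    rw [hrest, sum_cons] at hsum
    have := hcost.1
    omega

theorem stmt11 (N d n : ℕ) (hN : 2 ≤ N) (hd : max 63 (46 * N - 79) ≤ d)
    (hn : 7 * d + 14 ≤ n) :
    rho (Sset d N) n ≤ rho (T5 d) n := by
  have hdN : 46 * N ≤ d + 79 := by have := le_of_max_le_right hd; omega
  set m := d - N + 3
  have hm : m + N = d + 3 := by omega
  have hm3 : 3 ≤ m := by omega
  have hcore (p : n.Partition) (hp : ∀ x ∈ p.parts, x ∈ Sset d N) :=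
    mem_offMultiples_of_mem_core hm hm3 hp
  refine rho_le_rho_of_injOn (Or.inl rfl) (fun s => (t5Indices m s).map (tElem d))
    (fun p hp => ⟨?_, ?_⟩) (fun p q hp hq h => ?_)
  · exact (sum_map_tElem_t5Indices_le hN hdN hm (hcore p hp)).trans
      (max_le (by omega) p.parts_sum.le)
  · intro y hy
    obtain ⟨j, -, rfl⟩ := mem_map.mp hy
    exact ⟨by have := add_two_le_tElem (by omega : 1 ≤ d) j; omega, tElem_mem_T5 d j⟩
  · exact Nat.Partition.ext <| eq_of_t5Indices_eq hm3 (hcore p hp) (hcore q hq)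
      (p.parts_sum.trans q.parts_sum.symm)
      (map_injective (tElem_strictMono (by omega)).injective h)
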